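/- Let n ≥ 1 and let x₁ ≤ x₂ ≤ ⋯ ≤ x_{2n} be a nondecreasing 2n-tuple of real numbers. For every partition of the index set {1, …, 2n} into n pairwise disjoint pairs {i₁,j₁}, …, {i_n,j_n}, the partition into consecutive pairs minimizes the sum of squared differences: ∑_{m=1}^{n} (x_{2m} − x_{2m−1})² ≤ ∑_{m=1}^{n} (x_{j_m} − x_{i_m})². -/

import Mathlib

/-!
Split the sorted sequence at the cut between positions `2m` and `2m + 1`. The left part
`{0, …, 2m}` has odd size, so some pair `{i p, j p}` must straddle the cut, i.e. the consecutive
gap `[2m, 2m + 1]` lies inside the interval spanned by pair `p`. Charging every gap to such a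
pair, the gaps charged to `p` are disjoint subintervals of its interval, so by monotonicity their
lengths add up to at most the length `d` of the pair; as they are nonnegative, their squares add
up to at most `d ^ 2`.
-/

open Finset

lemma MonotoneOn.le_succ_of_mem_Ico {α : Type*} [Preorder α] {y : ℕ → α} {a b t : ℕ}
    (hy : MonotoneOn y (Set.Icc a b)) (ht : t ∈ Ico a b) : y t ≤ y (t + 1) := by
  rw [mem_Ico] at ht
  exact hy ⟨ht.1, ht.2.le⟩ ⟨by omega, ht.2⟩ t.le_succ

lemma Monotone.monotoneOn_extend_val {α : Type*} [Preorder α] {N : ℕ} {x : Fin N → α}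
    (hx : Monotone x) (e : ℕ → α) : MonotoneOn (Function.extend Fin.val x e) (Set.Iio N) :=
  fun s hs t ht hst => by
    have := hx (show (⟨s, hs⟩ : Fin N) ≤ ⟨t, ht⟩ from hst)
    rwa [← Fin.val_injective.extend_apply x e, ← Fin.val_injective.extend_apply x e] at this

lemma sq_apply_max_sub_apply_min {α R : Type*} [LinearOrder α] [CommRing R] (y : α → R)
    (s t : α) : (y (max s t) - y (min s t)) ^ 2 = (y t - y s) ^ 2 := by
  rcases le_total s t with h | h <;> simp [h, sub_sq_comm]

lemma MonotoneOn.sum_succ_sub_le_of_subset_Ico {R : Type*} [AddCommGroup R] [PartialOrder R]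
    [IsOrderedAddMonoid R] {y : ℕ → R} {a b : ℕ} (hy : MonotoneOn y (Set.Icc a b)) (hab : a ≤ b)
    {S : Finset ℕ} (hS : S ⊆ Ico a b) :
    ∑ t ∈ S, (y (t + 1) - y t) ≤ y b - y a := by
  calc ∑ t ∈ S, (y (t + 1) - y t)
      ≤ ∑ t ∈ Ico a b, (y (t + 1) - y t) :=
        sum_le_sum_of_subset_of_nonneg hS fun t ht _ => sub_nonneg.2 (hy.le_succ_of_mem_Ico ht)
    _ = y b - y a := by
        rw [sum_Ico_eq_sub _ hab, sum_range_sub, sum_range_sub, sub_sub_sub_cancel_right]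

lemma MonotoneOn.sum_sq_succ_sub_le_of_subset_Ico {R : Type*} [CommRing R] [PartialOrder R]
    [IsOrderedRing R] {y : ℕ → R} {a b : ℕ}
    (hy : MonotoneOn y (Set.Icc a b)) (hab : a ≤ b) {S : Finset ℕ} (hS : S ⊆ Ico a b) :
    ∑ t ∈ S, (y (t + 1) - y t) ^ 2 ≤ (y b - y a) ^ 2 := by
  have hstep : ∀ t ∈ S, 0 ≤ y (t + 1) - y t := fun t ht =>
    sub_nonneg.2 (hy.le_succ_of_mem_Ico (hS ht))
  calc ∑ t ∈ S, (y (t + 1) - y t) ^ 2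
      ≤ (∑ t ∈ S, (y (t + 1) - y t)) ^ 2 := sum_sq_le_sq_sum_of_nonneg hstep
    _ ≤ (y b - y a) ^ 2 := by
        gcongr
        · exact sum_nonneg hstep
        · exact hy.sum_succ_sub_le_of_subset_Ico hab hS

lemma exists_pair_split_of_odd_card {α ι : Type*} [DecidableEq α] [Fintype ι]
    {i j : ι → α} (hij : ∀ m, i m ≠ j m)
    (hdisj : ∀ m m', m ≠ m' → Disjoint ({i m, j m} : Finset α) {i m', j m'})
    (hcover : ∀ p, ∃ m, p = i m ∨ p = j m) {A : Finset α} (hA : Odd #A) :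
    ∃ m, ¬(i m ∈ A ↔ j m ∈ A) := by
  by_contra! hsplit
  have hA_eq : A = univ.biUnion fun m => {i m, j m} ∩ A := by
    ext p
    obtain ⟨m, hm⟩ := hcover p
    simp only [mem_biUnion, mem_univ, true_and, mem_inter, mem_insert, mem_singleton]
    exact ⟨fun hp => ⟨m, hm, hp⟩, fun ⟨_, _, hp⟩ => hp⟩
  have hcard : #A = ∑ m, #({i m, j m} ∩ A) := by
    conv_lhs => rw [hA_eq]
    exact card_biUnion fun m _ m' _ hmm' =>
      (hdisj m m' hmm').mono inter_subset_left inter_subset_left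
  have heven : ∀ m, Even #({i m, j m} ∩ A) := fun m => by
    by_cases hi : i m ∈ A
    · have hj := (hsplit m).1 hi
      simp [insert_inter_of_mem hi, singleton_inter_of_mem hj, card_pair (hij m)]
    · have hj := mt (hsplit m).2 hi
      simp [insert_inter_of_notMem hi, singleton_inter_of_notMem hj]
  exact Nat.not_even_iff_odd.2 hA (hcard ▸ even_sum _ fun m _ => heven m)
lemma exists_pair_mem_Ico_min_max {N : ℕ} {ι : Type*} [Fintype ι] {i j : ι → Fin N}
    (hij : ∀ m, i m ≠ j m)
    (hdisj : ∀ m m', m ≠ m' → Disjoint ({i m, j m} : Finset (Fin N)) {i m', j m'})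
    (hcover : ∀ p, ∃ m, p = i m ∨ p = j m) {k : ℕ} (hk : Even k) (hkN : k < N) :
    ∃ m, k ∈ Ico (min (i m : ℕ) (j m)) (max (i m : ℕ) (j m)) := by
  obtain ⟨m, hm⟩ := exists_pair_split_of_odd_card hij hdisj hcover
    (A := Iic ⟨k, hkN⟩) (by simpa [Fin.card_Iic] using hk.add_one)
  simp only [mem_Iic, Fin.le_def] at hm
  exact ⟨m, by simp only [mem_Ico]; omega⟩

/-- For a sorted `2n`-tuple, the partition into consecutive pairs minimizes
the total squared-difference distance over all partitions of the `2n`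
indices into `n` pairwise disjoint pairs. -/
theorem consecutive_pairs_min_sq (n : ℕ) (x : Fin (2 * n) → ℝ)
    (hx : Monotone x) (i j : Fin n → Fin (2 * n)) (hij : ∀ m, i m ≠ j m)
    (hdisj : ∀ m m', m ≠ m' →
      Disjoint ({i m, j m} : Finset (Fin (2 * n))) {i m', j m'})
    (hcover : ∀ p : Fin (2 * n), ∃ m, p = i m ∨ p = j m) :
    ∑ m : Fin n,
        (x ⟨2 * (m : ℕ) + 1, by have := m.isLt; omega⟩ -
          x ⟨2 * (m : ℕ), by have := m.isLt; omega⟩) ^ 2 ≤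
      ∑ m : Fin n, (x (j m) - x (i m)) ^ 2 := by
  set y : ℕ → ℝ := Function.extend Fin.val x 0
  have hyx : ∀ p : Fin (2 * n), y p = x p := Fin.val_injective.extend_apply x 0
  have hy : MonotoneOn y (Set.Iio (2 * n)) := hx.monotoneOn_extend_val 0
  have hgap (m : Fin n) : ∃ p, 2 * (m : ℕ) ∈ Ico (min (i p : ℕ) (j p)) (max (i p : ℕ) (j p)) :=
    exists_pair_mem_Ico_min_max hij hdisj hcover (even_two_mul _) (by omega)
  choose f hf using hgap
  have hfiber (p : Fin n) :
      ∑ m ∈ univ.filter (f · = p), (y (2 * m + 1) - y (2 * m)) ^ 2 ≤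
        (y (max (i p : ℕ) (j p)) - y (min (i p : ℕ) (j p))) ^ 2 := by
    rw [← sum_image (g := fun m : Fin n => 2 * (m : ℕ)) (f := fun t => (y (t + 1) - y t) ^ 2)
      fun m _ m' _ h => Fin.ext (by simpa using h)]
    refine (hy.mono fun t ht => ?_).sum_sq_succ_sub_le_of_subset_Ico min_le_max ?_
    · exact ht.2.trans_lt (max_lt (i p).isLt (j p).isLt)
    · simp only [subset_iff, mem_image, mem_filter, mem_univ, true_and]
      rintro _ ⟨m, rfl, rfl⟩
      exact hf m
  calc _ = ∑ m : Fin n, (y (2 * m + 1) - y (2 * m)) ^ 2 := by simp only [← hyx]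
    _ = ∑ p, ∑ m ∈ univ.filter (f · = p), (y (2 * m + 1) - y (2 * m)) ^ 2 :=
        (sum_fiberwise univ f _).symm
    _ ≤ ∑ p, (y (max (i p : ℕ) (j p)) - y (min (i p : ℕ) (j p))) ^ 2 :=
        sum_le_sum fun p _ => hfiber p
    _ = ∑ p, (x (j p) - x (i p)) ^ 2 := by simp only [sq_apply_max_sub_apply_min, hyx]
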